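/- With the definitions below, for every v ∈ ℝ^M with v_m ≥ 0 for all m and v ≠ 0, it holds that r(a* + v) > U. In other words, any unilateral (componentwise) increase of the privacy level parameters beyond a* strictly violates the regret budget U. -/

import Mathlib

open Finset Real

/-- `f(a) = max_m Σ_{m'} (c_m √(R² + α_{m'}²σ²)) / (c_{m'} √(R² + α_m²σ²))`. -/
noncomputable def fval (M : ℕ) (R σ : ℝ) (c a : Fin M → ℝ) : ℝ :=
  ⨆ m, ∑ m', (c m * Real.sqrt (R ^ 2 + (a m') ^ 2 * σ ^ 2))
    / (c m' * Real.sqrt (R ^ 2 + (a m) ^ 2 * σ ^ 2))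

/-- The asymptotic regret-bound constant
`r(a) = 2LK (d(R² + α̃(a)²σ²))^{1/3} (2S√M/λ̌ + √((M−1) + (2 f(a) − 1)²))`. -/
noncomputable def rval (M d : ℕ) (L K S lam R σ : ℝ) (c a : Fin M → ℝ) : ℝ :=
  2 * L * K * (d * (R ^ 2 + (⨆ m, a m) ^ 2 * σ ^ 2)) ^ ((1 : ℝ) / 3)
    * (2 * S * Real.sqrt M / lam
        + Real.sqrt ((M - 1) + (2 * fval M R σ c a - 1) ^ 2))

/-- `r̃ = (1/σ) √( U³ / (8L³K³ d M^{3/2} (2S/λ̌ + √(4M−3))³) − R² )`. -/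
noncomputable def rtil (M d : ℕ) (L K S lam σ U R : ℝ) : ℝ :=
  (1 / σ) * Real.sqrt (U ^ 3
    / (8 * L ^ 3 * K ^ 3 * d * (M : ℝ) ^ ((3 : ℝ) / 2)
        * (2 * S / lam + Real.sqrt (4 * M - 3)) ^ 3) - R ^ 2)

/-- The unimprovable privacy vector `a*`, with
`α*_m = √( (R²/σ² + r̃²) c_m²/c̃² − R²/σ² )` where `c̃ = max_m c_m`. -/
noncomputable def astar (M d : ℕ) (L K S lam σ U R : ℝ) (c : Fin M → ℝ) :
    Fin M → ℝ := fun m =>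
  Real.sqrt ((R ^ 2 / σ ^ 2 + (rtil M d L K S lam σ U R) ^ 2)
      * (c m) ^ 2 / (⨆ m', c m') ^ 2 - R ^ 2 / σ ^ 2)

private lemma aux_mul_lt {A P1 P2 Q1 Q2 : ℝ} (hA : 0 < A) (hP1 : 0 < P1) (hP : P1 ≤ P2)
    (hQ1 : 0 < Q1) (hQ : Q1 ≤ Q2) (hst : P1 < P2 ∨ Q1 < Q2) :
    A * P1 * Q1 < A * P2 * Q2 := by
  rcases hst with h | h
  · calc A * P1 * Q1 < A * P2 * Q1 :=
        mul_lt_mul_of_pos_right (mul_lt_mul_of_pos_left h hA) hQ1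
      _ ≤ A * P2 * Q2 :=
        mul_le_mul_of_nonneg_left hQ (mul_nonneg hA.le (by linarith))
  · calc A * P1 * Q1 < A * P1 * Q2 := mul_lt_mul_of_pos_left h (mul_pos hA hP1)
      _ ≤ A * P2 * Q2 := mul_le_mul_of_nonneg_right
        (mul_le_mul_of_nonneg_left hP hA.le) (by linarith)

set_option maxHeartbeats 1000000 in
/-- Any componentwise increase of the privacy level parameters beyond `a*` strictly
violates the regret budget `U`. -/
theorem astar_unimprovable
    (M d : ℕ) [NeZero M] (hd : 0 < d)
    (L K S σ lam U R : ℝ) (hL : 0 < L) (hK : 0 < K) (hS : 0 < S) (hσ : 0 < σ)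
    (hlam : 0 < lam) (hU : 0 < U) (hR : 0 ≤ R)
    (c : Fin M → ℝ) (hc : ∀ m, 0 < c m)
    (hrt : 0 < U ^ 3
      / (8 * L ^ 3 * K ^ 3 * d * (M : ℝ) ^ ((3 : ℝ) / 2)
          * (2 * S / lam + Real.sqrt (4 * M - 3)) ^ 3) - R ^ 2)
    (hrad : ∀ m, 0 ≤ (R ^ 2 / σ ^ 2 + (rtil M d L K S lam σ U R) ^ 2)
        * (c m) ^ 2 / (⨆ m', c m') ^ 2 - R ^ 2 / σ ^ 2)
    (hbudget : rval M d L K S lam R σ c (astar M d L K S lam σ U R c) = U) :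
    ∀ v : Fin M → ℝ, (∀ m, 0 ≤ v m) → v ≠ 0 →
      U < rval M d L K S lam R σ c (astar M d L K S lam σ U R c + v) := by
  intro v hv hvne
  classical
  haveI : NeZero M := inferInstance
  haveI hne : Nonempty (Fin M) := Fin.pos_iff_nonempty.mp (NeZero.pos M)
  set a := astar M d L K S lam σ U R c with ha_def
  set w := a + v with hw_def
  have hwm : ∀ m, w m = a m + v m := fun m => rfl
  have hMpos : (0:ℝ) < M := Nat.cast_pos.mpr (NeZero.pos M)
  have hM1 : (1:ℝ) ≤ M := Nat.one_le_cast.mpr (NeZero.pos M)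
  set rt := rtil M d L K S lam σ U R with hrt_def
  have hrt_pos : 0 < rt := by
    rw [hrt_def]; unfold rtil
    exact mul_pos (by positivity) (Real.sqrt_pos.mpr hrt)
  set ct := ⨆ m', c m' with hct_def
  have hbdc : BddAbove (Set.range c) := (Set.finite_range c).bddAbove
  have hct_pos : 0 < ct := lt_of_lt_of_le (hc (Classical.arbitrary _)) (le_ciSup hbdc _)
  set s : ℝ := (R ^ 2 + σ ^ 2 * rt ^ 2) / ct ^ 2 with hs_def
  have hs : 0 < s := by
    apply div_pos _ (pow_pos hct_pos 2)
    have h := mul_pos (pow_pos hσ 2) (pow_pos hrt_pos 2)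
    nlinarith [sq_nonneg R]
  have hXa : ∀ m, R ^ 2 + (a m) ^ 2 * σ ^ 2 = s * c m ^ 2 := by
    intro m
    have h1 : (a m) ^ 2 = (R ^ 2 / σ ^ 2 + rt ^ 2) * (c m) ^ 2 / ct ^ 2 - R ^ 2 / σ ^ 2 :=
      Real.sq_sqrt (hrad m)
    rw [h1, hs_def]
    field_simp
    ring
  set t := Real.sqrt s with ht_def
  have ht : 0 < t := Real.sqrt_pos.mpr hs
  have hsa : ∀ m, Real.sqrt (R ^ 2 + (a m) ^ 2 * σ ^ 2) = t * c m := by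
    intro m
    rw [hXa m, Real.sqrt_mul hs.le, Real.sqrt_sq (hc m).le]
  have ha0 : ∀ m, 0 ≤ a m := fun m => Real.sqrt_nonneg _
  have hw0 : ∀ m, a m ≤ w m := fun m => le_add_of_nonneg_right (hv m)
  have hXge : ∀ m, R ^ 2 + (a m) ^ 2 * σ ^ 2 ≤ R ^ 2 + (w m) ^ 2 * σ ^ 2 := by
    intro m
    have h2 : (a m) ^ 2 ≤ (w m) ^ 2 := pow_le_pow_left₀ (ha0 m) (hw0 m) 2
    nlinarith [sq_nonneg σ]
  have hsw_ge : ∀ m, t * c m ≤ Real.sqrt (R ^ 2 + (w m) ^ 2 * σ ^ 2) := by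
    intro m; rw [← hsa m]; exact Real.sqrt_le_sqrt (hXge m)
  have hXw_pos : ∀ m, 0 < Real.sqrt (R ^ 2 + (w m) ^ 2 * σ ^ 2) :=
    fun m => lt_of_lt_of_le (mul_pos ht (hc m)) (hsw_ge m)
  have hsw_gt : ∀ m, 0 < v m → t * c m < Real.sqrt (R ^ 2 + (w m) ^ 2 * σ ^ 2) := by
    intro m hm
    rw [← hsa m]
    apply Real.sqrt_lt_sqrt (by positivity)
    have h2 : (a m) ^ 2 < (w m) ^ 2 :=
      pow_lt_pow_left₀ (lt_add_of_pos_right _ hm) (ha0 m) two_ne_zero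
    nlinarith [pow_pos hσ 2]
  -- fval at a* equals M
  have hfa : fval M R σ c a = M := by
    have h1 : ∀ m : Fin M, (∑ m', (c m * Real.sqrt (R ^ 2 + (a m') ^ 2 * σ ^ 2))
        / (c m' * Real.sqrt (R ^ 2 + (a m) ^ 2 * σ ^ 2))) = (M : ℝ) := by
      intro m
      have h2 : ∀ m' : Fin M, (c m * Real.sqrt (R ^ 2 + (a m') ^ 2 * σ ^ 2))
          / (c m' * Real.sqrt (R ^ 2 + (a m) ^ 2 * σ ^ 2)) = 1 := by
        intro m'
        rw [hsa m', hsa m, div_eq_one_iff_eq (mul_pos (hc m') (mul_pos ht (hc m))).ne']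
        ring
      rw [Finset.sum_congr rfl fun m' _ => h2 m', Finset.sum_const, Finset.card_univ,
        Fintype.card_fin, nsmul_eq_mul, mul_one]
    unfold fval
    have h3 : (fun m : Fin M => ∑ m', (c m * Real.sqrt (R ^ 2 + (a m') ^ 2 * σ ^ 2))
        / (c m' * Real.sqrt (R ^ 2 + (a m) ^ 2 * σ ^ 2))) = fun _ => (M : ℝ) := funext h1
    rw [h3]
    exact ciSup_const
  have hfw_ge : ∀ m₁ : Fin M, (∑ m', (c m₁ * Real.sqrt (R ^ 2 + (w m') ^ 2 * σ ^ 2))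
      / (c m' * Real.sqrt (R ^ 2 + (w m₁) ^ 2 * σ ^ 2))) ≤ fval M R σ c w := by
    intro m₁
    unfold fval
    exact le_ciSup (f := fun m : Fin M => ∑ m', (c m * Real.sqrt (R ^ 2 + (w m') ^ 2 * σ ^ 2))
      / (c m' * Real.sqrt (R ^ 2 + (w m) ^ 2 * σ ^ 2))) ((Set.finite_range _).bddAbove) m₁
  -- sup facts
  have hbda : BddAbove (Set.range a) := (Set.finite_range a).bddAbove
  have hbdw : BddAbove (Set.range w) := (Set.finite_range w).bddAbove
  have hsup_le : (⨆ m, a m) ≤ ⨆ m, w m := ciSup_mono hbdw hw0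
  have hsupa_nonneg : 0 ≤ ⨆ m, a m :=
    le_trans (ha0 (Classical.arbitrary _)) (le_ciSup hbda _)
  have hXA_pos : 0 < R ^ 2 + (⨆ m, a m) ^ 2 * σ ^ 2 := by
    have m := Classical.arbitrary (Fin M)
    have h1 := hXa m
    have h2 : (a m) ^ 2 ≤ (⨆ m, a m) ^ 2 := pow_le_pow_left₀ (ha0 m) (le_ciSup hbda m) 2
    nlinarith [mul_pos hs (pow_pos (hc m) 2), sq_nonneg σ]
  have hdpos : (0:ℝ) < d := Nat.cast_pos.mpr hd
  have hXle : (d:ℝ) * (R ^ 2 + (⨆ m, a m) ^ 2 * σ ^ 2)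
      ≤ (d:ℝ) * (R ^ 2 + (⨆ m, w m) ^ 2 * σ ^ 2) := by
    have h2 : (⨆ m, a m) ^ 2 ≤ (⨆ m, w m) ^ 2 := pow_le_pow_left₀ hsupa_nonneg hsup_le 2
    have h4 : (⨆ m, a m) ^ 2 * σ ^ 2 ≤ (⨆ m, w m) ^ 2 * σ ^ 2 := by nlinarith [sq_nonneg σ]
    exact mul_le_mul_of_nonneg_left (by linarith) hdpos.le
  have hPa_pos : 0 < ((d:ℝ) * (R ^ 2 + (⨆ m, a m) ^ 2 * σ ^ 2)) ^ ((1:ℝ)/3) :=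
    Real.rpow_pos_of_pos (mul_pos hdpos hXA_pos) _
  have hPle : ((d:ℝ) * (R ^ 2 + (⨆ m, a m) ^ 2 * σ ^ 2)) ^ ((1:ℝ)/3)
      ≤ ((d:ℝ) * (R ^ 2 + (⨆ m, w m) ^ 2 * σ ^ 2)) ^ ((1:ℝ)/3) :=
    Real.rpow_le_rpow (mul_pos hdpos hXA_pos).le hXle (by norm_num)
  have hB_pos : 0 < 2 * S * Real.sqrt M / lam :=
    div_pos (mul_pos (by linarith) (Real.sqrt_pos.mpr hMpos)) hlam
  have hQa_pos : 0 < 2 * S * Real.sqrt M / lam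
      + Real.sqrt (((M:ℝ) - 1) + (2 * (M:ℝ) - 1) ^ 2) :=
    lt_of_lt_of_le hB_pos (le_add_of_nonneg_right (Real.sqrt_nonneg _))
  obtain ⟨m₀, hm₀⟩ : ∃ m, 0 < v m := by
    by_contra h
    push_neg at h
    exact hvne (funext fun m => le_antisymm (h m) (hv m))
  have hA : (0:ℝ) < 2 * L * K := by positivity
  by_cases hall : ∀ m, 0 < v m
  · -- all components increase: the sup strictly increases
    obtain ⟨mx, hmx⟩ := exists_eq_ciSup_of_finite (f := a)
    have hsup_lt : (⨆ m, a m) < ⨆ m, w m :=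
      calc (⨆ m, a m) = a mx := hmx.symm
        _ < w mx := lt_add_of_pos_right _ (hall mx)
        _ ≤ ⨆ m, w m := le_ciSup hbdw mx
    have hXlt : (d:ℝ) * (R ^ 2 + (⨆ m, a m) ^ 2 * σ ^ 2)
        < (d:ℝ) * (R ^ 2 + (⨆ m, w m) ^ 2 * σ ^ 2) := by
      have h2 : (⨆ m, a m) ^ 2 < (⨆ m, w m) ^ 2 :=
        pow_lt_pow_left₀ hsup_lt hsupa_nonneg two_ne_zero
      have h4 : (⨆ m, a m) ^ 2 * σ ^ 2 < (⨆ m, w m) ^ 2 * σ ^ 2 := by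
        nlinarith [pow_pos hσ 2]
      exact mul_lt_mul_of_pos_left (by linarith) hdpos
    have hP_lt : ((d:ℝ) * (R ^ 2 + (⨆ m, a m) ^ 2 * σ ^ 2)) ^ ((1:ℝ)/3)
        < ((d:ℝ) * (R ^ 2 + (⨆ m, w m) ^ 2 * σ ^ 2)) ^ ((1:ℝ)/3) :=
      Real.rpow_lt_rpow (mul_pos hdpos hXA_pos).le hXlt (by norm_num)
    -- fval w ≥ M
    obtain ⟨m₁, -, hm₁⟩ := Finset.exists_min_image Finset.univ
      (fun m => Real.sqrt (R ^ 2 + (w m) ^ 2 * σ ^ 2) / c m) Finset.univ_nonempty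
    have hterm : ∀ m' : Fin M, (1:ℝ) ≤ (c m₁ * Real.sqrt (R ^ 2 + (w m') ^ 2 * σ ^ 2))
        / (c m' * Real.sqrt (R ^ 2 + (w m₁) ^ 2 * σ ^ 2)) := by
      intro m'
      rw [one_le_div (mul_pos (hc m') (hXw_pos m₁))]
      have h3 := hm₁ m' (Finset.mem_univ m')
      rw [div_le_div_iff₀ (hc m₁) (hc m')] at h3
      nlinarith [h3]
    have hfw : (M:ℝ) ≤ fval M R σ c w := by
      refine le_trans ?_ (hfw_ge m₁)
      calc (M:ℝ) = ∑ _m' : Fin M, (1:ℝ) := by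
            rw [Finset.sum_const, Finset.card_univ, Fintype.card_fin, nsmul_eq_mul, mul_one]
        _ ≤ _ := Finset.sum_le_sum fun m' _ => hterm m'
    have hQle : 2 * S * Real.sqrt M / lam
        + Real.sqrt (((M:ℝ) - 1) + (2 * (M:ℝ) - 1) ^ 2)
        ≤ 2 * S * Real.sqrt M / lam
        + Real.sqrt (((M:ℝ) - 1) + (2 * fval M R σ c w - 1) ^ 2) := by
      have h2 : (2 * (M:ℝ) - 1) ^ 2 ≤ (2 * fval M R σ c w - 1) ^ 2 :=
        pow_le_pow_left₀ (by linarith) (by linarith) 2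
      exact add_le_add (le_refl _) (Real.sqrt_le_sqrt (by linarith))
    rw [← hbudget]
    unfold rval
    rw [hfa]
    exact aux_mul_lt hA hPa_pos hPle hQa_pos hQle (Or.inl hP_lt)
  · -- some component stays fixed: fval strictly increases
    push_neg at hall
    obtain ⟨m₁, hm₁⟩ := hall
    have hv₁ : v m₁ = 0 := le_antisymm hm₁ (hv m₁)
    have hwa₁ : w m₁ = a m₁ := by rw [hwm m₁, hv₁, add_zero]
    have hw₁ : Real.sqrt (R ^ 2 + (w m₁) ^ 2 * σ ^ 2) = t * c m₁ := by
      rw [hwa₁]; exact hsa m₁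
    have hterm : ∀ m' : Fin M, (1:ℝ) ≤ (c m₁ * Real.sqrt (R ^ 2 + (w m') ^ 2 * σ ^ 2))
        / (c m' * Real.sqrt (R ^ 2 + (w m₁) ^ 2 * σ ^ 2)) := by
      intro m'
      rw [one_le_div (mul_pos (hc m') (hXw_pos m₁)), hw₁]
      nlinarith [hsw_ge m', hc m₁, hc m']
    have hterm₀ : (1:ℝ) < (c m₁ * Real.sqrt (R ^ 2 + (w m₀) ^ 2 * σ ^ 2))
        / (c m₀ * Real.sqrt (R ^ 2 + (w m₁) ^ 2 * σ ^ 2)) := by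
      rw [one_lt_div (mul_pos (hc m₀) (hXw_pos m₁)), hw₁]
      nlinarith [hsw_gt m₀ hm₀, hc m₁, hc m₀]
    have hfw : (M:ℝ) < fval M R σ c w := by
      refine lt_of_lt_of_le ?_ (hfw_ge m₁)
      calc (M:ℝ) = ∑ _m' : Fin M, (1:ℝ) := by
            rw [Finset.sum_const, Finset.card_univ, Fintype.card_fin, nsmul_eq_mul, mul_one]
        _ < _ := Finset.sum_lt_sum (fun m' _ => hterm m') ⟨m₀, Finset.mem_univ m₀, hterm₀⟩
    have hQlt : 2 * S * Real.sqrt M / lam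
        + Real.sqrt (((M:ℝ) - 1) + (2 * (M:ℝ) - 1) ^ 2)
        < 2 * S * Real.sqrt M / lam
        + Real.sqrt (((M:ℝ) - 1) + (2 * fval M R σ c w - 1) ^ 2) := by
      have h2 : (2 * (M:ℝ) - 1) ^ 2 < (2 * fval M R σ c w - 1) ^ 2 :=
        pow_lt_pow_left₀ (by linarith) (by linarith) two_ne_zero
      have h3 : (0:ℝ) ≤ ((M:ℝ) - 1) + (2 * (M:ℝ) - 1) ^ 2 :=
        add_nonneg (by linarith) (sq_nonneg _)
      exact add_lt_add_of_le_of_lt (le_refl _) (Real.sqrt_lt_sqrt h3 (by linarith))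
    rw [← hbudget]
    unfold rval
    rw [hfa]
    exact aux_mul_lt hA hPa_pos hPle hQa_pos hQlt.le (Or.inr hQlt)
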